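/- (Corollary 2) Let fleet 1 have parameters (p̄⁽¹⁾, x⁽¹⁾), fleet 2 have parameters (p̄⁽²⁾, x⁽²⁾), and let the aggregate fleet (p̄, x) be their concatenation. Then for every p ≥ 0 the aggregate capacity curve satisfies Ω_{p̄,x}(p) = sup{E ≥ 0 : (p,E) ∉ F^∁₁ ⊕ F^∁₂}, where F^∁ⱼ is the complement of the flexibility of fleet j relative to [0,∞)² and ⊕ denotes the Minkowski sum. -/

import Mathlib

/-!
Pointwise `(a + b - (p₁ + p₂))⁺ ≤ (a - p₁)⁺ + (b - p₂)⁺`, so `Ω(p₁ + p₂) ≤ Ω₁(p₁) + Ω₂(p₂)`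
and no `E ≤ Ω(p)` lies in `F₁ᶜ ⊕ F₂ᶜ`. Conversely this bound is attained: the aggregate
signal `R₁ + R₂` is nonincreasing, so it exceeds `p` before some time `c` and stays below `p`
after it. Choosing `p₁` between the one-sided limits of `R₁` at `c`, and `p₂ = p - p₁` between
those of `R₂`, makes `R₁ - p₁` and `R₂ - p₂` have the same sign at every `t ≠ c`, where the
pointwise inequality is an equality. Hence the set in question is `[0, Ω(p)]`.
-/

open MeasureTheory Set Finset Pointwise

/-- The E-p transform of a signal `P`: the energy required above power rating `p`. -/
noncomputable def EpTransform (P : ℝ → ℝ) (p : ℝ) : ℝ :=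
  ∫ t in Set.Ioi (0:ℝ), max (P t - p) 0

/-- The worst-case reference signal `R_{p̄,x}(t) = Σᵢ p̄ᵢ·𝟙[0 ≤ t < xᵢ]`. -/
noncomputable def worstCase {n : ℕ} (pbar x : Fin n → ℝ) (t : ℝ) : ℝ :=
  ∑ i, if 0 ≤ t ∧ t < x i then pbar i else 0

/-- The discharging capacity curve `Ω_{p̄,x}`. -/
noncomputable def capacity {n : ℕ} (pbar x : Fin n → ℝ) (p : ℝ) : ℝ :=
  EpTransform (worstCase pbar x) p

/-- The complement of the flexibility relative to the quadrant `[0,∞)²`. -/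
noncomputable def flexibilityCompl {n : ℕ} (pbar x : Fin n → ℝ) : Set (ℝ × ℝ) :=
  {q : ℝ × ℝ | 0 ≤ q.1 ∧ 0 ≤ q.2 ∧ capacity pbar x q.1 < q.2}

open Filter

section Antitone

variable {f g : ℝ → ℝ} {a c p : ℝ}

lemma exists_threshold_of_antitoneOn (hf : AntitoneOn f (Ioi a)) {T : ℝ} (hT : a < T)
    (hfT : f T ≤ p) :
    ∃ c, a ≤ c ∧ (∀ t ∈ Ioo a c, p < f t) ∧ ∀ t ∈ Ioi c, f t ≤ p := by
  set S := Iic a ∪ {t | a < t ∧ p < f t}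
  have hS : BddAbove S := by
    refine ⟨T, ?_⟩
    rintro t (ht | ⟨hat, hpt⟩)
    · exact (mem_Iic.1 ht).trans hT.le
    · by_contra! hTt
      exact (hpt.trans_le (hf hT hat hTt.le)).not_ge hfT
  have haS : a ∈ S := Or.inl (Set.mem_Iic.2 le_rfl)
  refine ⟨sSup S, le_csSup hS haS, fun t ht => ?_, fun t ht => ?_⟩
  · obtain ⟨s, hs, hts⟩ := exists_lt_of_lt_csSup ⟨a, haS⟩ ht.2
    rcases hs with hsa | ⟨has, hps⟩
    · exact absurd (ht.1.trans hts) (not_lt.2 hsa)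
    · exact hps.trans_le (hf ht.1 has hts.le)
  · by_contra! hpt
    exact notMem_of_csSup_lt ht hS (Or.inr ⟨(le_csSup hS haS).trans_lt ht, hpt⟩)

lemma sSup_image_Ioi_add_le (hf : AntitoneOn f (Ioi c)) (hg : AntitoneOn g (Ioi c))
    (hfb : BddAbove (f '' Ioi c)) (hgb : BddAbove (g '' Ioi c))
    (h : ∀ t ∈ Ioi c, f t + g t ≤ p) :
    sSup (f '' Ioi c) + sSup (g '' Ioi c) ≤ p :=
  le_of_tendsto ((hf.tendsto_nhdsGT hfb).add (hg.tendsto_nhdsGT hgb))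
    (eventually_nhdsWithin_of_forall h)

lemma le_sInf_image_Ioo_add (hac : a < c) (hf : AntitoneOn f (Ioo a c))
    (hg : AntitoneOn g (Ioo a c)) (hfb : BddBelow (f '' Ioo a c)) (hgb : BddBelow (g '' Ioo a c))
    (h : ∀ t ∈ Ioo a c, p ≤ f t + g t) :
    p ≤ sInf (f '' Ioo a c) + sInf (g '' Ioo a c) :=
  ge_of_tendsto ((hf.tendsto_nhdsWithin_Ioo_left (nonempty_Ioo.2 hac) hfb).add
    (hg.tendsto_nhdsWithin_Ioo_left (nonempty_Ioo.2 hac) hgb))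
    (mem_of_superset (Ioo_mem_nhdsLT hac) h)

lemma sSup_image_Ioi_le_sInf_image_Ioo (hf : AntitoneOn f (Ioi a)) (hac : a < c) :
    sSup (f '' Ioi c) ≤ sInf (f '' Ioo a c) :=
  calc sSup (f '' Ioi c) ≤ f c := csSup_le (nonempty_Ioi.image f)
        (forall_mem_image.2 fun _ ht => hf hac (hac.trans ht) ht.le)
    _ ≤ sInf (f '' Ioo a c) := le_csInf ((Set.nonempty_Ioo.2 hac).image f)
        (forall_mem_image.2 fun _ ht => hf ht.1 hac ht.2.le)

lemma exists_split_of_antitoneOn (hf : AntitoneOn f (Ioi a)) (hg : AntitoneOn g (Ioi a))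
    (hf0 : ∀ t ∈ Ioi a, 0 ≤ f t) (hg0 : ∀ t ∈ Ioi a, 0 ≤ g t) (hac : a ≤ c)
    (hleft : ∀ t ∈ Ioo a c, p ≤ f t + g t) (hright : ∀ t ∈ Ioi c, f t + g t ≤ p) :
    ∃ p₁ p₂, 0 ≤ p₁ ∧ 0 ≤ p₂ ∧ p₁ + p₂ = p ∧
      (∀ t ∈ Ioo a c, p₁ ≤ f t ∧ p₂ ≤ g t) ∧ ∀ t ∈ Ioi c, f t ≤ p₁ ∧ g t ≤ p₂ := by
  have hIoi : Ioi c ⊆ Ioi a := Ioi_subset_Ioi hac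
  have hfR : BddAbove (f '' Ioi c) :=
    ⟨p, forall_mem_image.2 fun t ht => by linarith [hright t ht, hg0 t (hIoi ht)]⟩
  have hgR : BddAbove (g '' Ioi c) :=
    ⟨p, forall_mem_image.2 fun t ht => by linarith [hright t ht, hf0 t (hIoi ht)]⟩
  set fR := sSup (f '' Ioi c)
  set gR := sSup (g '' Ioi c)
  have le_fR : ∀ t ∈ Ioi c, f t ≤ fR := fun t ht => le_csSup hfR (mem_image_of_mem f ht)
  have le_gR : ∀ t ∈ Ioi c, g t ≤ gR := fun t ht => le_csSup hgR (mem_image_of_mem g ht)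
  have hfR0 : 0 ≤ fR := (hf0 _ (hIoi (lt_add_one c))).trans (le_fR _ (lt_add_one c))
  have hgR0 : 0 ≤ gR := (hg0 _ (hIoi (lt_add_one c))).trans (le_gR _ (lt_add_one c))
  have hR : fR + gR ≤ p := sSup_image_Ioi_add_le (hf.mono hIoi) (hg.mono hIoi) hfR hgR hright
  rcases hac.eq_or_lt with rfl | hac
  · exact ⟨fR, p - fR, hfR0, by linarith, by ring, fun t ht => (lt_asymm ht.1 ht.2).elim,
      fun t ht => ⟨le_fR t ht, by linarith [le_gR t ht]⟩⟩
  have hIoo : Ioo a c ⊆ Ioi a := Ioo_subset_Ioi_self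
  have hfL : BddBelow (f '' Ioo a c) := ⟨0, forall_mem_image.2 fun t ht => hf0 t (hIoo ht)⟩
  have hgL : BddBelow (g '' Ioo a c) := ⟨0, forall_mem_image.2 fun t ht => hg0 t (hIoo ht)⟩
  set fL := sInf (f '' Ioo a c)
  set gL := sInf (g '' Ioo a c)
  have fL_le : ∀ t ∈ Ioo a c, fL ≤ f t := fun t ht => csInf_le hfL (mem_image_of_mem f ht)
  have gL_le : ∀ t ∈ Ioo a c, gL ≤ g t := fun t ht => csInf_le hgL (mem_image_of_mem g ht)
  have hL : p ≤ fL + gL := le_sInf_image_Ioo_add hac (hf.mono hIoo) (hg.mono hIoo) hfL hgL hleft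
  have hfRL : fR ≤ fL := sSup_image_Ioi_le_sInf_image_Ioo hf hac
  have hgRL : gR ≤ gL := sSup_image_Ioi_le_sInf_image_Ioo hg hac
  -- any `p₁ ∈ [max fR (p - gL), min fL (p - gR)]` works; this interval is nonempty by `hR`, `hL`
  have hp₁ : max fR (p - gL) ≤ p - gR := max_le (by linarith) (by linarith)
  refine ⟨max fR (p - gL), p - max fR (p - gL), le_max_of_le_left hfR0, by linarith, by ring,
    fun t ht => ⟨?_, ?_⟩, fun t ht => ⟨(le_fR t ht).trans (le_max_left _ _), ?_⟩⟩
  · exact (max_le hfRL (by linarith)).trans (fL_le t ht)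
  · linarith [le_max_right fR (p - gL), gL_le t ht]
  · linarith [le_gR t ht]

end Antitone

lemma max_add_sub_add_le (a b p q : ℝ) :
    max (a + b - (p + q)) 0 ≤ max (a - p) 0 + max (b - q) 0 :=
  max_le (by linarith [le_max_left (a - p) 0, le_max_left (b - q) 0]) (by positivity)

lemma max_add_sub_add_eq {a b p q : ℝ} (h : (p ≤ a ∧ q ≤ b) ∨ (a ≤ p ∧ b ≤ q)) :
    max (a + b - (p + q)) 0 = max (a - p) 0 + max (b - q) 0 := by
  rcases h with ⟨ha, hb⟩ | ⟨ha, hb⟩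
  · rw [max_eq_left (by linarith), max_eq_left (by linarith), max_eq_left (by linarith)]
    ring
  · rw [max_eq_right (by linarith), max_eq_right (by linarith), max_eq_right (by linarith)]
    ring

lemma MeasureTheory.Integrable.max_sub_const_zero {α : Type*} [MeasurableSpace α]
    {μ : Measure α} {P : α → ℝ} (hP : Integrable P μ) {p : ℝ} (hp : 0 ≤ p) :
    Integrable (fun t => max (P t - p) 0) μ :=
  hP.norm.mono' ((hP.aestronglyMeasurable.sub aestronglyMeasurable_const).sup
    aestronglyMeasurable_const) (ae_of_all _ fun t => by
      rw [Real.norm_of_nonneg (le_max_right _ _)]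
      exact max_le (by linarith [le_abs_self (P t), Real.norm_eq_abs (P t)]) (norm_nonneg _))

section EpTransform

variable {P Q : ℝ → ℝ} {p q : ℝ}

lemma EpTransform_nonneg (P : ℝ → ℝ) (p : ℝ) : 0 ≤ EpTransform P p :=
  setIntegral_nonneg measurableSet_Ioi fun _ _ => le_max_right _ _

lemma EpTransform_add_le (hP : IntegrableOn P (Ioi 0)) (hQ : IntegrableOn Q (Ioi 0))
    (hp : 0 ≤ p) (hq : 0 ≤ q) :
    EpTransform (P + Q) (p + q) ≤ EpTransform P p + EpTransform Q q := by
  unfold EpTransform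
  rw [← integral_add (hP.max_sub_const_zero hp) (hQ.max_sub_const_zero hq)]
  exact integral_mono_of_nonneg (ae_of_all _ fun _ => le_max_right _ _)
    ((hP.max_sub_const_zero hp).add (hQ.max_sub_const_zero hq))
    (ae_of_all _ fun t => max_add_sub_add_le (P t) (Q t) p q)

lemma EpTransform_add_eq (hP : IntegrableOn P (Ioi 0)) (hQ : IntegrableOn Q (Ioi 0))
    (hp : 0 ≤ p) (hq : 0 ≤ q) (c : ℝ)
    (h : ∀ t ∈ Ioi (0 : ℝ), t ≠ c → (p ≤ P t ∧ q ≤ Q t) ∨ (P t ≤ p ∧ Q t ≤ q)) :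
    EpTransform (P + Q) (p + q) = EpTransform P p + EpTransform Q q := by
  unfold EpTransform
  rw [← integral_add (hP.max_sub_const_zero hp) (hQ.max_sub_const_zero hq)]
  refine setIntegral_congr_ae measurableSet_Ioi ?_
  filter_upwards [Measure.ae_ne volume c] with t htc ht
  exact max_add_sub_add_eq (h t ht htc)

lemma exists_EpTransform_add_eq (hP : AntitoneOn P (Ioi 0)) (hQ : AntitoneOn Q (Ioi 0))
    (hP0 : ∀ t ∈ Ioi (0 : ℝ), 0 ≤ P t) (hQ0 : ∀ t ∈ Ioi (0 : ℝ), 0 ≤ Q t)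
    (hPi : IntegrableOn P (Ioi 0)) (hQi : IntegrableOn Q (Ioi 0)) (hp : 0 ≤ p)
    {T : ℝ} (hT : 0 < T) (hPQT : P T + Q T ≤ p) :
    ∃ p₁ p₂, 0 ≤ p₁ ∧ 0 ≤ p₂ ∧ p₁ + p₂ = p ∧
      EpTransform (P + Q) p = EpTransform P p₁ + EpTransform Q p₂ := by
  obtain ⟨c, hc, hleft, hright⟩ := exists_threshold_of_antitoneOn (hP.add hQ) hT hPQT
  obtain ⟨p₁, p₂, hp₁, hp₂, rfl, hl, hr⟩ := exists_split_of_antitoneOn hP hQ hP0 hQ0 hc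
    (fun t ht => (hleft t ht).le) hright
  refine ⟨p₁, p₂, hp₁, hp₂, rfl, EpTransform_add_eq hPi hQi hp₁ hp₂ c fun t ht htc => ?_⟩
  rcases htc.lt_or_gt with htc | htc
  exacts [Or.inl (hl t ⟨ht, htc⟩), Or.inr (hr t htc)]

end EpTransform

section Fleet

variable {n m : ℕ}

lemma worstCase_eq_sum_indicator (pbar x : Fin n → ℝ) :
    worstCase pbar x = ∑ i, (Ico 0 (x i)).indicator fun _ => pbar i := by
  ext t
  simp only [worstCase, Finset.sum_apply, indicator_apply, Set.mem_Ico]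

lemma integrable_worstCase (pbar x : Fin n → ℝ) : Integrable (worstCase pbar x) := by
  rw [worstCase_eq_sum_indicator]
  exact integrable_finsetSum' _ fun i _ =>
    (integrable_indicator_iff measurableSet_Ico).2 (integrableOn_const measure_Ico_lt_top.ne)

lemma worstCase_nonneg {pbar : Fin n → ℝ} (hp : ∀ i, 0 ≤ pbar i) (x : Fin n → ℝ) (t : ℝ) :
    0 ≤ worstCase pbar x t :=
  Finset.sum_nonneg fun i _ => by split_ifs <;> simp [hp i]

lemma antitoneOn_worstCase {pbar : Fin n → ℝ} (hp : ∀ i, 0 ≤ pbar i) (x : Fin n → ℝ) :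
    AntitoneOn (worstCase pbar x) (Ici 0) := fun s hs t _ hst =>
  Finset.sum_le_sum fun i _ => by
    by_cases ht : 0 ≤ t ∧ t < x i
    · rw [if_pos ht, if_pos ⟨hs, hst.trans_lt ht.2⟩]
    · rw [if_neg ht]; split_ifs <;> simp [hp i]

lemma worstCase_eventually_eq_zero (pbar x : Fin n → ℝ) :
    ∀ᶠ t in atTop, worstCase pbar x t = 0 := by
  filter_upwards [eventually_all.2 fun i => eventually_ge_atTop (x i)] with t ht
  exact Finset.sum_eq_zero fun i _ => if_neg fun h => (ht i).not_gt h.2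

lemma worstCase_append (pbar₁ x₁ : Fin n → ℝ) (pbar₂ x₂ : Fin m → ℝ) :
    worstCase (Fin.append pbar₁ pbar₂) (Fin.append x₁ x₂) =
      worstCase pbar₁ x₁ + worstCase pbar₂ x₂ := by
  ext t
  simp [worstCase, Fin.sum_univ_add]

lemma capacity_nonneg (pbar x : Fin n → ℝ) (p : ℝ) : 0 ≤ capacity pbar x p :=
  EpTransform_nonneg _ p

lemma capacity_append_le (pbar₁ x₁ : Fin n → ℝ) (pbar₂ x₂ : Fin m → ℝ) {p₁ p₂ : ℝ}
    (hp₁ : 0 ≤ p₁) (hp₂ : 0 ≤ p₂) :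
    capacity (Fin.append pbar₁ pbar₂) (Fin.append x₁ x₂) (p₁ + p₂) ≤
      capacity pbar₁ x₁ p₁ + capacity pbar₂ x₂ p₂ := by
  rw [capacity, worstCase_append]
  exact EpTransform_add_le (integrable_worstCase _ _).integrableOn
    (integrable_worstCase _ _).integrableOn hp₁ hp₂

lemma exists_capacity_append_eq {pbar₁ : Fin n → ℝ} (hpbar₁ : ∀ i, 0 ≤ pbar₁ i) (x₁ : Fin n → ℝ)
    {pbar₂ : Fin m → ℝ} (hpbar₂ : ∀ i, 0 ≤ pbar₂ i) (x₂ : Fin m → ℝ) {p : ℝ} (hp : 0 ≤ p) :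
    ∃ p₁ p₂, 0 ≤ p₁ ∧ 0 ≤ p₂ ∧ p₁ + p₂ = p ∧
      capacity (Fin.append pbar₁ pbar₂) (Fin.append x₁ x₂) p =
        capacity pbar₁ x₁ p₁ + capacity pbar₂ x₂ p₂ := by
  obtain ⟨T, hT, h₁, h₂⟩ := ((eventually_gt_atTop 0).and
    ((worstCase_eventually_eq_zero pbar₁ x₁).and (worstCase_eventually_eq_zero pbar₂ x₂))).exists
  rw [capacity, worstCase_append]
  exact exists_EpTransform_add_eq ((antitoneOn_worstCase hpbar₁ x₁).mono Ioi_subset_Ici_self)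
    ((antitoneOn_worstCase hpbar₂ x₂).mono Ioi_subset_Ici_self)
    (fun t _ => worstCase_nonneg hpbar₁ x₁ t) (fun t _ => worstCase_nonneg hpbar₂ x₂ t)
    (integrable_worstCase _ _).integrableOn (integrable_worstCase _ _).integrableOn hp hT
    (by rw [h₁, h₂, add_zero]; exact hp)

lemma mem_flexibilityCompl_add_iff (pbar₁ x₁ : Fin n → ℝ) (pbar₂ x₂ : Fin m → ℝ) {p E : ℝ} :
    (p, E) ∈ flexibilityCompl pbar₁ x₁ + flexibilityCompl pbar₂ x₂ ↔
      ∃ p₁ p₂, 0 ≤ p₁ ∧ 0 ≤ p₂ ∧ p₁ + p₂ = p ∧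
        capacity pbar₁ x₁ p₁ + capacity pbar₂ x₂ p₂ < E := by
  constructor
  · rintro ⟨⟨p₁, E₁⟩, ⟨hp₁, -, hE₁⟩, ⟨p₂, E₂⟩, ⟨hp₂, -, hE₂⟩, hsum⟩
    simp only [Prod.mk_add_mk, Prod.mk.injEq] at hsum
    exact ⟨p₁, p₂, hp₁, hp₂, hsum.1, by linarith [hsum.2]⟩
  · rintro ⟨p₁, p₂, hp₁, hp₂, rfl, hE⟩
    set δ := (E - capacity pbar₁ x₁ p₁ - capacity pbar₂ x₂ p₂) / 2
    have hδ : 0 < δ := half_pos (by linarith)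
    refine ⟨(p₁, capacity pbar₁ x₁ p₁ + δ), ⟨hp₁, ?_, ?_⟩,
      (p₂, capacity pbar₂ x₂ p₂ + δ), ⟨hp₂, ?_, ?_⟩, ?_⟩
    · linarith [capacity_nonneg pbar₁ x₁ p₁]
    · simp only; linarith
    · linarith [capacity_nonneg pbar₂ x₂ p₂]
    · simp only; linarith
    · exact Prod.ext rfl (by simp only [Prod.snd_add, δ]; ring)

end Fleet

theorem aggregate_capacity_eq_sSup_general {n m : ℕ}
    (pbar1 x1 : Fin n → ℝ) (pbar2 x2 : Fin m → ℝ)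
    (hp1 : ∀ i, 0 < pbar1 i)
    (hp2 : ∀ i, 0 < pbar2 i) :
    ∀ p ≥ (0:ℝ),
      capacity (Fin.append pbar1 pbar2) (Fin.append x1 x2) p =
        sSup {E : ℝ | 0 ≤ E ∧
          (p, E) ∉ flexibilityCompl pbar1 x1 + flexibilityCompl pbar2 x2} := by
  intro p hp
  obtain ⟨p₁, p₂, hp₁, hp₂, rfl, hsplit⟩ :=
    exists_capacity_append_eq (fun i => (hp1 i).le) x1 (fun i => (hp2 i).le) x2 hp
  have hset : {E : ℝ | 0 ≤ E ∧
      (p₁ + p₂, E) ∉ flexibilityCompl pbar1 x1 + flexibilityCompl pbar2 x2} =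
      Icc 0 (capacity (Fin.append pbar1 pbar2) (Fin.append x1 x2) (p₁ + p₂)) := by
    ext E
    simp only [mem_ofPred_eq, mem_flexibilityCompl_add_iff, Set.mem_Icc, not_exists, not_and,
      not_lt]
    refine and_congr_right fun _ => ⟨fun h => hsplit ▸ h p₁ p₂ hp₁ hp₂ rfl, ?_⟩
    rintro hE q₁ q₂ hq₁ hq₂ hq
    exact hE.trans (hq ▸ capacity_append_le pbar1 x1 pbar2 x2 hq₁ hq₂)
  rw [hset, csSup_Icc (capacity_nonneg _ _ _)]

/-- Corollary 2: the capacity curve of the aggregate (concatenated) fleet is obtained from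
the Minkowski sum of the complementary flexibilities of the two sub-fleets. -/
theorem aggregate_capacity_eq_sSup {n m : ℕ}
    (pbar1 x1 : Fin n → ℝ) (pbar2 x2 : Fin m → ℝ)
    (hp1 : ∀ i, 0 < pbar1 i) (hx1 : ∀ i, 0 ≤ x1 i)
    (hp2 : ∀ i, 0 < pbar2 i) (hx2 : ∀ i, 0 ≤ x2 i) :
    ∀ p ≥ (0:ℝ),
      capacity (Fin.append pbar1 pbar2) (Fin.append x1 x2) p =
        sSup {E : ℝ | 0 ≤ E ∧
          (p, E) ∉ flexibilityCompl pbar1 x1 + flexibilityCompl pbar2 x2} :=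
  aggregate_capacity_eq_sSup_general pbar1 x1 pbar2 x2 hp1 hp2
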